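/- Let s be a complex number with Re(s) > −2 and let T(r) = r⁻⁷ Σ_{c=1,(c,r)=1}^{r} |S(r,c)|⁶. Then Σ_{k=0}^{∞} T(3^k)/3^{ks} = (1 − 3^{−(3s+6)})⁻¹ · (1 + 3^{−(2s+14)} Σ_{c=1,(c,3)=1}^{9} |S(9,c)|⁶ − 3^{−(3s+7)}), where the series converges absolutely. -/

import Mathlib

open Finset

noncomputable def e (x : ℝ) : ℂ := Complex.exp (2 * Real.pi * Complex.I * x)

noncomputable def S (q : ℕ) (b : ℤ) : ℂ :=
  ∑ m ∈ Finset.Icc 1 q, e ((b : ℝ) * (m : ℝ) ^ 3 / q)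

noncomputable def T (r : ℕ) : ℝ :=
  (r : ℝ)⁻¹ ^ 7 * ∑ c ∈ (Finset.Icc 1 r).filter (fun c => Nat.gcd c r = 1),
    ‖S r c‖ ^ 6

open Function

/-!
For `3 ∤ c`, write `m = 3^(v+1) j + r` with `j < 9` in `S(3^(v+3), c)`. Modulo `3^(v+3)` the cube
is `r³ + 3^(v+2) r² j`, so the sum over `j` cancels (a sum of cube roots of unity) unless `3 ∣ r`,
and the surviving terms give `S(3^(v+3), c) = 9 S(3^v, c)`. Together with `S(1, c) = 1` and
`S(3, c) = 0` this computes `T(3^k)` on each residue class of `k` modulo 3 (counting units by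
`φ(3^k)`, resp. using that `S(9, ·)` has period 9), so the series is three geometric series of
ratio `3^(-(3s+6))`, of modulus `< 1` when `Re s > -2`.
-/

theorem Finset.sum_range_mul_eq_sum_sum {M : Type*} [AddCommMonoid M] (f : ℕ → M) (a b : ℕ) :
    ∑ m ∈ range (a * b), f m = ∑ y ∈ range b, ∑ x ∈ range a, f (a * y + x) := by
  induction b with
  | zero => simp
  | succ b ih => rw [sum_range_succ, ← ih, Nat.mul_succ, sum_range_add]

namespace Function.Periodic

variable {M : Type*} [AddCommMonoid M] {g : ℕ → M} {N : ℕ}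

theorem sum_Ico_add_eq_sum_range (hg : Periodic g N) (n : ℕ) :
    ∑ x ∈ Ico n (n + N), g x = ∑ x ∈ range N, g x := by
  rw [← Nat.image_Ico_mod n N, sum_image (Nat.mod_injOn_Ico n N)]
  exact sum_congr rfl fun x _ => (hg.map_mod_nat x).symm

theorem sum_Icc_one_eq_sum_range (hg : Periodic g N) :
    ∑ x ∈ Icc 1 N, g x = ∑ x ∈ range N, g x := by
  rw [← Ico_add_one_right_eq_Icc, add_comm, hg.sum_Ico_add_eq_sum_range]

theorem sum_range_mul (hg : Periodic g N) (k : ℕ) :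
    ∑ x ∈ range (N * k), g x = k • ∑ x ∈ range N, g x := by
  rw [sum_range_mul_eq_sum_sum]
  have hshift (y x : ℕ) : g (N * y + x) = g x := by
    simpa [add_comm, mul_comm] using hg.nat_mul y x
  simp_rw [hshift, sum_const, card_range]

theorem sum_Icc_one_mul (hg : Periodic g N) (k : ℕ) :
    ∑ x ∈ Icc 1 (N * k), g x = k • ∑ x ∈ Icc 1 N, g x := by
  have hgk : Periodic g (N * k) := by simpa [mul_comm] using hg.nat_mul k
  rw [hg.sum_Icc_one_eq_sum_range, hgk.sum_Icc_one_eq_sum_range, hg.sum_range_mul]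

end Function.Periodic

lemma e_add (x y : ℝ) : e (x + y) = e x * e y := by
  simp only [e, Complex.ofReal_add, mul_add, Complex.exp_add]

lemma e_intCast (n : ℤ) : e n = 1 := by
  rw [e, ← Complex.exp_int_mul_two_pi_mul_I n]
  push_cast
  ring_nf

lemma e_add_intCast (x : ℝ) (n : ℤ) : e (x + n) = e x := by
  rw [e_add, e_intCast, mul_one]

lemma e_eq_of_eq_add_intCast {x y : ℝ} (n : ℤ) (h : x = y + n) : e x = e y := by
  rw [h, e_add_intCast]

lemma e_natCast_mul (n : ℕ) (x : ℝ) : e (n * x) = e x ^ n := by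
  rw [e, e, ← Complex.exp_nat_mul]
  push_cast
  ring_nf

lemma e_intCast_div_eq_one_iff {q : ℕ} (hq : q ≠ 0) (a : ℤ) : e (a / q) = 1 ↔ (q : ℤ) ∣ a := by
  rw [e, Complex.exp_eq_one_iff]
  constructor
  · rintro ⟨n, hn⟩
    have : (a : ℂ) / q = n := by
      apply mul_left_cancel₀ (by simp [Real.pi_ne_zero] : 2 * (Real.pi : ℂ) * Complex.I ≠ 0)
      push_cast at hn
      linear_combination hn
    refine ⟨n, ?_⟩
    field_simp at this
    exact_mod_cast this
  · rintro ⟨n, rfl⟩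
    refine ⟨n, ?_⟩
    push_cast
    field_simp

lemma sum_range_e_div_three_pow (a : ℤ) (n : ℕ) :
    ∑ j ∈ range (3 * n), e (a / 3) ^ j = if (3 : ℤ) ∣ a then (3 * n : ℂ) else 0 := by
  have hcube : e (a / 3) ^ 3 = 1 := by
    rw [← e_natCast_mul, show ((3 : ℕ) : ℝ) * (a / 3) = (a : ℤ) by push_cast; ring, e_intCast]
  have h := e_intCast_div_eq_one_iff three_ne_zero a
  push_cast at h
  split_ifs with ha
  · simp [h.mpr ha]
  · rw [geom_sum_eq (mt h.mp ha), pow_mul, hcube, one_pow, sub_self, zero_div]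

lemma periodic_e_mul_cube_div (b : ℤ) (q : ℕ) : Periodic (fun m : ℕ => e (b * m ^ 3 / q)) q := by
  intro m
  rcases eq_or_ne q 0 with rfl | hq
  · simp
  · apply e_eq_of_eq_add_intCast (b * (3 * m ^ 2 + 3 * m * q + q ^ 2))
    push_cast
    field_simp
    ring

lemma S_eq_sum_range (q : ℕ) (b : ℤ) : S q b = ∑ m ∈ range q, e (b * m ^ 3 / q) :=
  (periodic_e_mul_cube_div b q).sum_Icc_one_eq_sum_range

lemma S_add_self (q : ℕ) (b : ℤ) : S q (b + q) = S q b := by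
  rcases eq_or_ne q 0 with rfl | hq
  · simp
  refine sum_congr rfl fun m _ => ?_
  apply e_eq_of_eq_add_intCast (m ^ 3)
  push_cast
  field_simp

lemma S_one (b : ℤ) : S 1 b = 1 := by
  simpa [S] using e_intCast b

lemma three_dvd_cube_sub_self (m : ℤ) : 3 ∣ m ^ 3 - m := by
  refine (ZMod.intCast_zmod_eq_zero_iff_dvd _ 3).mp ?_
  push_cast
  rw [ZMod.pow_card, sub_self]

lemma S_three {c : ℤ} (hc : ¬ 3 ∣ c) : S 3 c = 0 := by
  have hterm (m : ℕ) : e (c * m ^ 3 / (3 : ℕ)) = e (c / 3) ^ m := by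
    obtain ⟨k, hk⟩ := three_dvd_cube_sub_self m
    rw [← e_natCast_mul]
    apply e_eq_of_eq_add_intCast (c * k)
    have hk' : (m : ℝ) ^ 3 - m = 3 * k := by exact_mod_cast hk
    push_cast
    linear_combination (c : ℝ) / 3 * hk'
  rw [S_eq_sum_range]
  simp_rw [hterm]
  simpa [hc] using sum_range_e_div_three_pow c 1

lemma three_dvd_mul_sq_iff {c : ℤ} (hc : ¬ 3 ∣ c) (r : ℕ) : (3 : ℤ) ∣ c * r ^ 2 ↔ 3 ∣ r := by
  rw [Int.prime_three.dvd_mul, or_iff_right hc, Int.prime_three.dvd_pow_iff_dvd two_ne_zero]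
  exact_mod_cast Iff.rfl

lemma S_three_pow_add_three {c : ℤ} (hc : ¬ 3 ∣ c) (v : ℕ) :
    S (3 ^ (v + 3)) c = 9 * S (3 ^ v) c := by
  have hsplit (r j : ℕ) : e (c * ((3 ^ (v + 1) * j + r : ℕ) : ℝ) ^ 3 / ((3 ^ (v + 3) : ℕ) : ℝ)) =
      e (c * r ^ 3 / 3 ^ (v + 3)) * e ((c * r ^ 2 : ℤ) / 3) ^ j := by
    rw [← e_natCast_mul, ← e_add]
    apply e_eq_of_eq_add_intCast (c * (r * j ^ 2 * 3 ^ v + j ^ 3 * 3 ^ (2 * v)))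
    push_cast
    field_simp
    ring
  have hinner (r : ℕ) : ∑ j ∈ range 9, e ((c * r ^ 2 : ℤ) / 3) ^ j = if 3 ∣ r then 9 else 0 := by
    have h := sum_range_e_div_three_pow (c * r ^ 2) 3
    simp only [three_dvd_mul_sq_iff hc] at h
    norm_num at h
    exact_mod_cast h
  calc S (3 ^ (v + 3)) c
      = ∑ r ∈ range (3 ^ (v + 1)), ∑ j ∈ range 9,
          e (c * ((3 ^ (v + 1) * j + r : ℕ) : ℝ) ^ 3 / ((3 ^ (v + 3) : ℕ) : ℝ)) := by
        rw [S_eq_sum_range, show 3 ^ (v + 3) = 3 ^ (v + 1) * 9 by ring, sum_range_mul_eq_sum_sum,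
          sum_comm]
    _ = ∑ r ∈ range (3 * 3 ^ v), if 3 ∣ r then 9 * e (c * r ^ 3 / 3 ^ (v + 3)) else 0 := by
        simp_rw [hsplit, ← mul_sum, hinner, mul_ite, mul_zero, mul_comm, ← pow_succ']
    _ = ∑ i ∈ range (3 ^ v), 9 * e (c * i ^ 3 / 3 ^ v) := by
        rw [sum_range_mul_eq_sum_sum]
        refine sum_congr rfl fun i _ => ?_
        simp only [sum_range_succ, sum_range_zero, Nat.dvd_add_right (dvd_mul_right 3 i)]
        norm_num
        congr 1
        field_simp
        ring
    _ = 9 * S (3 ^ v) c := by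
        rw [S_eq_sum_range, mul_sum]
        push_cast
        rfl

lemma S_three_pow_three_mul_add {c : ℤ} (hc : ¬ 3 ∣ c) (u i : ℕ) :
    S (3 ^ (3 * u + i)) c = 9 ^ u * S (3 ^ i) c := by
  induction u with
  | zero => simp
  | succ u ih =>
    rw [show 3 * (u + 1) + i = 3 * u + i + 3 by ring, S_three_pow_add_three hc, ih]
    ring

lemma card_filter_gcd_eq_one_eq_totient (n : ℕ) :
    #{c ∈ Icc 1 n | Nat.gcd c n = 1} = Nat.totient n := by
  rw [← Nat.filter_coprime_Ico_eq_totient n 1, ← Ico_add_one_right_eq_Icc, add_comm]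
  simp_rw [Nat.coprime_comm (m := n)]

lemma not_three_dvd_of_gcd_three_pow_eq_one {c k : ℕ} (hk : k ≠ 0) (h : Nat.gcd c (3 ^ k) = 1) :
    ¬ (3 : ℤ) ∣ c := by
  have hc : Nat.Coprime c 3 := (Nat.coprime_pow_right_iff (Nat.pos_of_ne_zero hk) c 3).mp h
  exact_mod_cast (Nat.Prime.coprime_iff_not_dvd Nat.prime_three).mp hc.symm

lemma T_one : T 1 = 1 := by
  simp [T, S_one]

lemma T_three_pow_three_mul_add_one (u : ℕ) : T (3 ^ (3 * u + 1)) = 0 := by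
  rw [T, sum_eq_zero fun c hc => ?_, mul_zero]
  have hc3 := not_three_dvd_of_gcd_three_pow_eq_one (by omega) (mem_filter.mp hc).2
  rw [S_three_pow_three_mul_add hc3, pow_one, S_three hc3, mul_zero, norm_zero]
  norm_num

lemma T_three_pow_three_mul_add_two (u : ℕ) :
    T (3 ^ (3 * u + 2)) =
      (∑ c ∈ (Icc 1 9).filter (fun c => Nat.gcd c 3 = 1), ‖S 9 c‖ ^ 6) / 3 ^ (6 * u + 14) := by
  set g : ℕ → ℝ := fun c => if Nat.gcd c 3 = 1 then ‖S 9 c‖ ^ 6 else 0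
  have hg : Periodic g 9 := by
    intro c
    have hgcd : (c + 9).gcd 3 = c.gcd 3 := by simp [show c + 9 = c + 3 * 3 from rfl]
    simp only [g, hgcd]
    push_cast
    rw [show (c : ℤ) + 9 = c + (9 : ℕ) from rfl, S_add_self]
  have hsum : ∑ c ∈ (Icc 1 (3 ^ (3 * u + 2))).filter (fun c => Nat.gcd c (3 ^ (3 * u + 2)) = 1),
      ‖S (3 ^ (3 * u + 2)) c‖ ^ 6 = 9 ^ (6 * u) * ∑ c ∈ Icc 1 (3 ^ (3 * u + 2)), g c := by
    rw [mul_sum, sum_filter]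
    refine sum_congr rfl fun c _ => ?_
    have hcop : Nat.gcd c (3 ^ (3 * u + 2)) = 1 ↔ Nat.gcd c 3 = 1 :=
      Nat.coprime_pow_right_iff (by omega) c 3
    simp only [g, hcop]
    split_ifs with hc
    · rw [S_three_pow_three_mul_add (not_three_dvd_of_gcd_three_pow_eq_one one_ne_zero
        (by simpa using hc)), norm_mul, norm_pow]
      norm_num
      ring
    · simp
  rw [T, hsum, show 3 ^ (3 * u + 2) = 9 * 3 ^ (3 * u) by ring, hg.sum_Icc_one_mul, sum_filter]
  push_cast
  rw [show (9 : ℝ) = 3 ^ 2 by norm_num, ← pow_mul]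
  field_simp
  ring

lemma T_three_pow_three_mul_add_three (u : ℕ) : T (3 ^ (3 * u + 3)) = 2 / 3 ^ (6 * u + 7) := by
  have hterm : ∀ c ∈ (Icc 1 (3 ^ (3 * u + 3))).filter (fun c => Nat.gcd c (3 ^ (3 * u + 3)) = 1),
      ‖S (3 ^ (3 * u + 3)) c‖ ^ 6 = 9 ^ (6 * u + 6) := by
    intro c hc
    have hc3 := not_three_dvd_of_gcd_three_pow_eq_one (by omega) (mem_filter.mp hc).2
    rw [show 3 * u + 3 = 3 * (u + 1) + 0 by ring, S_three_pow_three_mul_add hc3, pow_zero, S_one]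
    norm_num
    ring
  rw [T, sum_congr rfl hterm, sum_const, card_filter_gcd_eq_one_eq_totient,
    show 3 * u + 3 = 3 * u + 2 + 1 by ring, Nat.totient_prime_pow_succ Nat.prime_three]
  push_cast
  rw [show (9 : ℝ) = 3 ^ 2 by norm_num, ← pow_mul]
  field_simp
  ring

section GeometricBlocks

variable {𝕜 : Type*} [NormedField 𝕜] {N : ℕ} [NeZero N] {f : ℕ → 𝕜} {q : 𝕜} {c : Fin N → 𝕜}

theorem summable_norm_of_eq_geometric_mul (hq : ‖q‖ < 1)
    (hf : ∀ u (j : Fin N), f (u * N + j) = q ^ u * c j) : Summable (‖f ·‖) := by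
  rw [← (Nat.divModEquiv N).symm.summable_iff]
  have hprod : (‖f ·‖) ∘ (Nat.divModEquiv N).symm = fun p => ‖q‖ ^ p.1 * ‖c p.2‖ := by
    ext ⟨u, j⟩
    simp [hf]
  rw [hprod]
  exact (summable_geometric_of_lt_one (norm_nonneg q) hq).mul_of_nonneg Summable.of_finite
    (fun _ => by positivity) (fun _ => norm_nonneg _)

theorem hasSum_of_eq_geometric_mul [CompleteSpace 𝕜] (hq : ‖q‖ < 1)
    (hf : ∀ u (j : Fin N), f (u * N + j) = q ^ u * c j) : HasSum f ((1 - q)⁻¹ * ∑ j, c j) := by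
  rw [← (Nat.divModEquiv N).symm.hasSum_iff]
  have hprod : f ∘ (Nat.divModEquiv N).symm = fun p => q ^ p.1 * c p.2 := by
    ext ⟨u, j⟩
    simp [hf]
  rw [hprod]
  refine (hasSum_geometric_of_norm_lt_one hq).mul (hasSum_fintype c) ?_
  refine summable_mul_of_summable_norm ?_ Summable.of_finite
  simpa [norm_pow] using summable_geometric_of_lt_one (norm_nonneg q) hq

end GeometricBlocks

lemma norm_three_cpow_lt_one {w : ℂ} (hw : w.re < 0) : ‖(3 : ℂ) ^ w‖ < 1 := by
  rw [show (3 : ℂ) = ((3 : ℝ) : ℂ) by norm_num, Complex.norm_cpow_eq_rpow_re_of_pos (by norm_num)]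
  exact Real.rpow_lt_one_of_one_lt_of_neg (by norm_num) hw

lemma ofReal_div_three_pow_div_three_cpow (R : ℝ) (n : ℕ) (w : ℂ) :
    ((R / 3 ^ n : ℝ) : ℂ) / 3 ^ w = R * 3 ^ (-(n : ℂ) - w) := by
  rw [sub_eq_add_neg, Complex.cpow_add _ _ three_ne_zero, Complex.cpow_neg, Complex.cpow_neg,
    Complex.cpow_natCast]
  push_cast
  ring

lemma three_cpow_pow_mul_three_cpow (x y : ℂ) (u : ℕ) :
    ((3 : ℂ) ^ x) ^ u * 3 ^ y = 3 ^ (u * x + y) := by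
  rw [← Complex.cpow_nat_mul, Complex.cpow_add _ _ three_ne_zero]

lemma T_three_pow_div_three_cpow (s : ℂ) (u : ℕ) (j : Fin 3) :
    (T (3 ^ (u * 3 + j + 1)) : ℂ) / 3 ^ (((u * 3 + j + 1 : ℕ) : ℂ) * s) =
      ((3 : ℂ) ^ (-(3 * s + 6))) ^ u *
        ![0, (∑ c ∈ (Icc 1 9).filter (fun c => Nat.gcd c 3 = 1), (‖S 9 c‖ ^ 6 : ℂ)) *
          3 ^ (-(2 * s + 14)), 2 * 3 ^ (-(3 * s + 7))] j := by
  fin_cases j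
  · simp [mul_comm u 3, T_three_pow_three_mul_add_one]
  · simp only [Fin.reduceFinMk, Fin.isValue, Matrix.cons_val_one, Matrix.cons_val_zero]
    rw [show u * 3 + 1 + 1 = 3 * u + 2 by ring, T_three_pow_three_mul_add_two,
      ofReal_div_three_pow_div_three_cpow, mul_left_comm, three_cpow_pow_mul_three_cpow]
    push_cast
    ring_nf
  · simp only [Fin.reduceFinMk, Matrix.cons_val]
    rw [show u * 3 + 2 + 1 = 3 * u + 3 by ring, T_three_pow_three_mul_add_three,
      ofReal_div_three_pow_div_three_cpow, mul_left_comm, three_cpow_pow_mul_three_cpow]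
    push_cast
    ring_nf

theorem local_factor_three (s : ℂ) (hs : -2 < s.re) :
    Summable (fun k : ℕ => ‖(T (3 ^ k) : ℂ) / (3 : ℂ) ^ ((k : ℂ) * s)‖) ∧
    (∑' k : ℕ, (T (3 ^ k) : ℂ) / (3 : ℂ) ^ ((k : ℂ) * s)) =
      (1 - (3 : ℂ) ^ (-(3 * s + 6)))⁻¹ *
        (1 + (3 : ℂ) ^ (-(2 * s + 14)) *
            ∑ c ∈ (Finset.Icc 1 9).filter (fun c => Nat.gcd c 3 = 1),
              (‖S 9 c‖ ^ 6 : ℂ)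
          - (3 : ℂ) ^ (-(3 * s + 7))) := by
  set a : ℕ → ℂ := fun k => (T (3 ^ k) : ℂ) / (3 : ℂ) ^ ((k : ℂ) * s)
  set q : ℂ := 3 ^ (-(3 * s + 6))
  have hq : ‖q‖ < 1 := norm_three_cpow_lt_one (by simp; linarith)
  have hblock := T_three_pow_div_three_cpow s
  have hshift := (hasSum_nat_add_iff 1).mp
    (hasSum_of_eq_geometric_mul (f := fun k => a (k + 1)) hq hblock)
  refine ⟨(summable_nat_add_iff 1).mp (summable_norm_of_eq_geometric_mul hq hblock), ?_⟩
  have hq3 : q = 3 * 3 ^ (-(3 * s + 7)) := by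
    simp only [q]
    rw [show -(3 * s + 6) = 1 + -(3 * s + 7) by ring, Complex.cpow_add _ _ three_ne_zero,
      Complex.cpow_one]
  have h1q : 1 - q ≠ 0 := sub_ne_zero.mpr fun h => by simp [← h] at hq
  rw [hshift.tsum_eq, sum_range_one, Fin.sum_univ_three]
  simp only [a, pow_zero, T_one, Nat.cast_zero, zero_mul, Complex.cpow_zero, Complex.ofReal_one,
    div_one, Matrix.cons_val, zero_add]
  rw [hq3] at h1q ⊢
  field_simp
  ring
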